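/- (Theorem 4.1, part 1: BIBO stabilization of retarded systems with time-varying delays.) Let M_inf^K ≥ 0 be such that ‖𝒦∗φ‖_∞ ≤ M_inf^K·‖φ‖_∞ for every bounded φ : ℝ → ℂ^n vanishing on (−∞,0]. Let M_inf^cl ≥ 0 be such that for every bounded w : ℝ → ℂ^n and every closed-loop auxiliary solution z with input w for which z and ż are bounded, one has both ‖z‖_∞ ≤ M_inf^cl·‖w‖_∞ and ‖ż‖_∞ ≤ M_inf^cl·‖w‖_∞; let M_inf^clnom, M_inf^clnomd ≥ 0 be analogous gains bounding ‖v‖_∞ and ‖v̇‖_∞ by multiples of ‖r‖_∞ for closed-loop nominal solutions v with reference r. Assume M_inf^cl·( Σ_{j=1}^J μ_j‖A_j‖ + Σ_{k=1}^K ν_k‖B_k‖·M_inf^K + ε·‖h‖_∞ ) < 1. Then there exists C ≥ 0, depending only on the data, such that for every bounded reference r vanishing on (−∞,0], every closed-loop nominal solution v satisfying the above gain bounds, and every closed-loop time-varying solution x with x and ẋ bounded, one has ‖x‖_∞ ≤ C·‖r‖_∞. -/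

import Mathlib

open MeasureTheory

/-- The supremum norm over `t > 0`. -/
noncomputable def supNorm {E : Type*} [NormedAddCommGroup E] (f : ℝ → E) : ℝ :=
  ⨆ t : Set.Ioi (0 : ℝ), ‖f (t : ℝ)‖

/-- A function `ℝ → E` is bounded. -/
def IsBddFun {E : Type*} [NormedAddCommGroup E] (f : ℝ → E) : Prop :=
  ∃ C, ∀ t, ‖f t‖ ≤ C

/-- Convolution of the controller kernel `𝒦` (a matrix-valued measure, given by
a density `k` with respect to a positive measure `μK`) with a signal `φ`:
`(𝒦∗φ)(t) = ∫ d𝒦(θ) φ(t−θ)`. -/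
noncomputable def Kconv {n p : ℕ} (μK : Measure ℝ)
    (k : ℝ → EuclideanSpace ℂ (Fin n) →L[ℂ] EuclideanSpace ℂ (Fin p))
    (φ : ℝ → EuclideanSpace ℂ (Fin n)) (t : ℝ) : EuclideanSpace ℂ (Fin p) :=
  ∫ θ, (k θ) (φ (t - θ)) ∂μK


/-!
The time-varying solution `x` also solves the nominal closed loop, driven by the input `w` made of
the mismatches between time-varying and nominal delayed terms plus the reference terms. A point
delay off by at most `μ` changes `x` by at most `μ ‖ẋ‖_∞` (mean value theorem); through the
controller the change is at most `M_K ν ‖ẋ‖_∞`, because the difference of `𝒦∗x` at two instants is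
`𝒦∗φ` at one instant, `φ` being a difference of two shifts of `x`; the distributed delay contributes
at most `ε ‖h‖_∞ ‖x‖_∞`. As the auxiliary gain bounds `‖x‖_∞` and `‖ẋ‖_∞` by `M_cl ‖w‖_∞`, this
gives `‖w‖_∞ ≤ M_cl κ ‖w‖_∞ + (‖B‖ + Σ ‖B_k‖) ‖r‖_∞`, with `κ` the bracket of the smallness
condition, and `M_cl κ < 1` closes the loop.
-/

open Set

section SupNorm

variable {E : Type*} [NormedAddCommGroup E] {f : ℝ → E}

lemma supNorm_nonneg (f : ℝ → E) : 0 ≤ supNorm f :=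
  Real.iSup_nonneg fun _ => norm_nonneg _

lemma supNorm_le_of_forall_pos {C : ℝ} (h : ∀ t > 0, ‖f t‖ ≤ C) : supNorm f ≤ C :=
  haveI : Nonempty (Ioi (0 : ℝ)) := ⟨⟨1, mem_Ioi.2 one_pos⟩⟩
  ciSup_le fun t => h t t.2

lemma IsBddFun.norm_le_supNorm (hf : IsBddFun f) {t : ℝ} (ht : 0 < t) : ‖f t‖ ≤ supNorm f := by
  obtain ⟨C, hC⟩ := hf
  exact le_ciSup (f := fun s : Ioi (0 : ℝ) => ‖f s‖) ⟨C, by rintro _ ⟨s, rfl⟩; exact hC s⟩ ⟨t, ht⟩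

lemma IsBddFun.norm_le_supNorm_of_eq_zero (hf : IsBddFun f) (h0 : ∀ t ≤ 0, f t = 0) (t : ℝ) :
    ‖f t‖ ≤ supNorm f := by
  rcases le_or_gt t 0 with ht | ht
  · simpa [h0 t ht] using supNorm_nonneg f
  · exact hf.norm_le_supNorm ht

end SupNorm

section Calculus

variable {E : Type*} [NormedAddCommGroup E] [NormedSpace ℝ E]

lemma HasDerivAt.eq_zero_of_eq_zero_on_Iic {f : ℝ → E} {f' : E} {t : ℝ} (hf : HasDerivAt f f' t)
    (h0 : ∀ s ≤ t, f s = 0) : f' = 0 :=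
  (uniqueDiffWithinAt_Iic t).eq_deriv _ hf.hasDerivWithinAt
    ((hasDerivWithinAt_const t _ (0 : E)).congr (fun s hs => h0 s hs) (h0 t le_rfl))

lemma norm_sub_le_supNorm_deriv_mul {x x' : ℝ → E} (hx : ∀ t, HasDerivAt x (x' t) t)
    (hx0 : ∀ t ≤ 0, x t = 0) (hx' : IsBddFun x') (a b : ℝ) :
    ‖x b - x a‖ ≤ supNorm x' * |b - a| := by
  have hx'0 : ∀ t ≤ 0, x' t = 0 := fun t ht =>
    (hx t).eq_zero_of_eq_zero_on_Iic fun s hs => hx0 s (hs.trans ht)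
  simpa [Real.norm_eq_abs] using convex_univ.norm_image_sub_le_of_norm_hasDerivWithin_le
    (fun t _ => (hx t).hasDerivWithinAt) (fun t _ => hx'.norm_le_supNorm_of_eq_zero hx'0 t)
    (mem_univ a) (mem_univ b)

lemma norm_intervalIntegral_smul_le {𝕜 : Type*} [NormedField 𝕜] [NormedSpace 𝕜 E]
    {g : ℝ → 𝕜} {f : ℝ → E} {a b H M : ℝ} (hH : 0 ≤ H) (hg : ∀ θ ∈ uIoc a b, ‖g θ‖ ≤ H)
    (hf : ∀ θ, ‖f θ‖ ≤ M) : ‖∫ θ in a..b, g θ • f θ‖ ≤ H * M * |b - a| :=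
  intervalIntegral.norm_integral_le_of_norm_le_const fun θ hθ => by
    rw [norm_smul]; exact mul_le_mul (hg θ hθ) (hf θ) (norm_nonneg _) hH

end Calculus

lemma IsCompact.norm_le_iSup_norm {α F : Type*} [TopologicalSpace α] [SeminormedAddGroup F]
    {s : Set α} (hs : IsCompact s) {g : α → F} (hg : ContinuousOn g s) {a : α} (ha : a ∈ s) :
    ‖g a‖ ≤ ⨆ b : s, ‖g b‖ :=
  le_ciSup (by simpa [image_eq_range] using hs.bddAbove_image hg.norm) (⟨a, ha⟩ : s)

lemma norm_sum_apply_le_sum_mul {𝕜 ι E F : Type*} [NontriviallyNormedField 𝕜]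
    [SeminormedAddCommGroup E] [NormedSpace 𝕜 E] [SeminormedAddCommGroup F] [NormedSpace 𝕜 F]
    (s : Finset ι) (T : ι → E →L[𝕜] F) (v : ι → E) (c : ι → ℝ) {L : ℝ}
    (hv : ∀ i ∈ s, ‖v i‖ ≤ c i * L) : ‖∑ i ∈ s, T i (v i)‖ ≤ (∑ i ∈ s, c i * ‖T i‖) * L := by
  rw [Finset.sum_mul]
  refine (norm_sum_le _ _).trans (Finset.sum_le_sum fun i hi => ?_)
  calc ‖T i (v i)‖ ≤ ‖T i‖ * (c i * L) := (T i).le_of_opNorm_le_of_le le_rfl (hv i hi)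
    _ = c i * ‖T i‖ * L := by ring

lemma le_of_small_gain {x y w c z M α β : ℝ} (hM : 0 ≤ M) (hα : 0 ≤ α) (hβ : 0 ≤ β)
    (hx : x ≤ M * w) (hy : y ≤ M * w) (hw : w ≤ α * y + β * x + c * z)
    (hsmall : M * (α + β) < 1) : x ≤ M * c / (1 - M * (α + β)) * z := by
  have hw' : w * (1 - M * (α + β)) ≤ c * z := by
    nlinarith [mul_le_mul_of_nonneg_left hy hα, mul_le_mul_of_nonneg_left hx hβ]
  calc x ≤ M * w := hx
    _ ≤ M * (c * z / (1 - M * (α + β))) := by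
        gcongr; exact (le_div_iff₀ (by linarith)).2 hw'
    _ = M * c / (1 - M * (α + β)) * z := by ring

section Kconv

variable {n p : ℕ} {μK : Measure ℝ} [IsFiniteMeasure μK]
  {k : ℝ → EuclideanSpace ℂ (Fin n) →L[ℂ] EuclideanSpace ℂ (Fin p)} {Ck : ℝ}
  {f g : ℝ → EuclideanSpace ℂ (Fin n)}

lemma norm_Kconv_le (hCk : ∀ θ, ‖k θ‖ ≤ Ck) {Cf : ℝ} (hCf : ∀ s, ‖f s‖ ≤ Cf) (t : ℝ) :
    ‖Kconv μK k f t‖ ≤ Ck * Cf * μK.real univ :=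
  norm_integral_le_of_norm_le_const <| ae_of_all _ fun θ =>
    (k θ).le_of_opNorm_le_of_le (hCk θ) (hCf _)

lemma IsBddFun.Kconv (hCk : ∀ θ, ‖k θ‖ ≤ Ck) (hf : IsBddFun f) : IsBddFun (Kconv μK k f) :=
  let ⟨_, hCf⟩ := hf
  ⟨_, norm_Kconv_le hCk hCf⟩

lemma integrable_Kconv_integrand (hk : StronglyMeasurable k) (hCk : ∀ θ, ‖k θ‖ ≤ Ck)
    (hfc : Continuous f) (hf : IsBddFun f) (t : ℝ) :
    Integrable (fun θ => k θ (f (t - θ))) μK := by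
  obtain ⟨Cf, hCf⟩ := hf
  have hm : StronglyMeasurable fun θ => k θ (f (t - θ)) :=
    isBoundedBilinearMap_apply.continuous.comp_stronglyMeasurable
      (hk.prodMk (hfc.comp (continuous_const.sub continuous_id)).stronglyMeasurable)
  exact .of_bound hm.aestronglyMeasurable (Ck * Cf) <| ae_of_all _ fun θ =>
    (k θ).le_of_opNorm_le_of_le (hCk θ) (hCf _)

lemma Kconv_sub (hk : StronglyMeasurable k) (hCk : ∀ θ, ‖k θ‖ ≤ Ck)
    (hfc : Continuous f) (hf : IsBddFun f) (hgc : Continuous g) (hg : IsBddFun g) (t : ℝ) :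
    Kconv μK k (fun s => f s - g s) t = Kconv μK k f t - Kconv μK k g t := by
  simp only [Kconv, map_sub]
  exact integral_sub (integrable_Kconv_integrand hk hCk hfc hf t)
    (integrable_Kconv_integrand hk hCk hgc hg t)

omit [IsFiniteMeasure μK] in
lemma Kconv_comp_sub_const (f : ℝ → EuclideanSpace ℂ (Fin n)) (a t : ℝ) :
    Kconv μK k (fun s => f (s - a)) t = Kconv μK k f (t - a) := by
  simp only [Kconv, sub_right_comm]

omit [IsFiniteMeasure μK] in
lemma Kconv_eq_zero_of_nonpos (hsupp : μK (Iio 0) = 0) (h0 : ∀ s ≤ 0, f s = 0) {t : ℝ}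
    (ht : t ≤ 0) : Kconv μK k f t = 0 := by
  refine integral_eq_zero_of_ae ?_
  filter_upwards [measure_eq_zero_iff_ae_notMem.mp hsupp] with θ hθ
  rw [h0 _ (by linarith [not_lt.mp (mem_Iio.not.mp hθ)]), map_zero, Pi.zero_apply]

lemma norm_Kconv_sub_le (hsupp : μK (Iio 0) = 0) (hk : StronglyMeasurable k)
    (hCk : ∀ θ, ‖k θ‖ ≤ Ck) {MK : ℝ} (hMK : 0 ≤ MK)
    (hgain : ∀ φ : ℝ → EuclideanSpace ℂ (Fin n), IsBddFun φ → (∀ t ≤ (0 : ℝ), φ t = 0) →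
      supNorm (Kconv μK k φ) ≤ MK * supNorm φ)
    {x : ℝ → EuclideanSpace ℂ (Fin n)} (hxc : Continuous x) (hxb : IsBddFun x)
    (hx0 : ∀ t ≤ 0, x t = 0) {L : ℝ} (hlip : ∀ a b, ‖x b - x a‖ ≤ L * |b - a|) (s₁ s₂ : ℝ) :
    ‖Kconv μK k x s₁ - Kconv μK k x s₂‖ ≤ MK * (L * |s₁ - s₂|) := by
  -- both shifts `u - sᵢ` are nonnegative, so the shifted signals still vanish on `(-∞, 0]`
  set u := max s₁ s₂
  have hshift : ∀ s ≤ u, IsBddFun (fun t => x (t - (u - s))) ∧ Continuous (fun t => x (t - (u - s)))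
      ∧ ∀ t ≤ 0, x (t - (u - s)) = 0 := fun s hs =>
    ⟨let ⟨C, hC⟩ := hxb; ⟨C, fun _ => hC _⟩, hxc.comp (continuous_id.sub continuous_const),
      fun t ht => hx0 _ (by linarith)⟩
  obtain ⟨hb₁, hc₁, h0₁⟩ := hshift s₁ (le_max_left _ _)
  obtain ⟨hb₂, hc₂, h0₂⟩ := hshift s₂ (le_max_right _ _)
  set φ := fun t => x (t - (u - s₁)) - x (t - (u - s₂))
  have hφb : IsBddFun φ := let ⟨C₁, h₁⟩ := hb₁; let ⟨C₂, h₂⟩ := hb₂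
    ⟨C₁ + C₂, fun t => (norm_sub_le _ _).trans (add_le_add (h₁ t) (h₂ t))⟩
  have hφ0 : ∀ t ≤ 0, φ t = 0 := fun t ht => by simp only [φ, h0₁ t ht, h0₂ t ht, sub_zero]
  have hφ : supNorm φ ≤ L * |s₁ - s₂| := supNorm_le_of_forall_pos fun t _ => by
    have := hlip (t - (u - s₂)) (t - (u - s₁))
    rwa [show t - (u - s₁) - (t - (u - s₂)) = s₁ - s₂ by ring] at this
  have hKφ : Kconv μK k φ u = Kconv μK k x s₁ - Kconv μK k x s₂ := by
    rw [Kconv_sub hk hCk hc₁ hb₁ hc₂ hb₂, Kconv_comp_sub_const, Kconv_comp_sub_const,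
      sub_sub_cancel, sub_sub_cancel]
  calc ‖Kconv μK k x s₁ - Kconv μK k x s₂‖ = ‖Kconv μK k φ u‖ := by rw [hKφ]
    _ ≤ supNorm (Kconv μK k φ) := (hφb.Kconv hCk).norm_le_supNorm_of_eq_zero
        (fun t ht => Kconv_eq_zero_of_nonpos hsupp hφ0 ht) u
    _ ≤ MK * supNorm φ := hgain φ hφb hφ0
    _ ≤ MK * (L * |s₁ - s₂|) := by gcongr

end Kconv

section ClosedLoop

variable {n p J K : ℕ} (Aj : Fin J → EuclideanSpace ℂ (Fin n) →L[ℂ] EuclideanSpace ℂ (Fin n))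
  (B : EuclideanSpace ℂ (Fin p) →L[ℂ] EuclideanSpace ℂ (Fin n))
  (Bk : Fin K → EuclideanSpace ℂ (Fin p) →L[ℂ] EuclideanSpace ℂ (Fin n))
  (hd : Fin J → ℝ) (τ : Fin J → ℝ → ℝ) (T : Fin K → ℝ) (σ : Fin K → ℝ → ℝ)
  (D : ℝ) (δ : ℝ → ℝ) (h : ℝ → ℂ) (μK : Measure ℝ)
  (k : ℝ → EuclideanSpace ℂ (Fin n) →L[ℂ] EuclideanSpace ℂ (Fin p))

noncomputable def delayMismatchInput (x : ℝ → EuclideanSpace ℂ (Fin n))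
    (r : ℝ → EuclideanSpace ℂ (Fin p)) (t : ℝ) : EuclideanSpace ℂ (Fin n) :=
  ∑ j, Aj j (x (t - τ j t) - x (t - hd j)) + (∫ θ in D..δ t, h θ • x (t - θ))
    + ∑ kk, Bk kk (Kconv μK k x (t - σ kk t) - Kconv μK k x (t - T kk))
    + (B (r t) + ∑ kk, Bk kk (r (t - σ kk t)))

lemma timeVarying_rhs_eq_nominal_rhs_add
    (A : EuclideanSpace ℂ (Fin n) →L[ℂ] EuclideanSpace ℂ (Fin n)) {ε : ℝ} (hε : 0 ≤ ε)
    (hεD : ε ≤ D) (hh : ContinuousOn h (Icc 0 (D + ε)))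
    {x : ℝ → EuclideanSpace ℂ (Fin n)} (hx : Continuous x) (r : ℝ → EuclideanSpace ℂ (Fin p))
    {t : ℝ} (hδ : D - ε ≤ δ t ∧ δ t ≤ D + ε) :
    A (x t) + ∑ j, Aj j (x (t - τ j t)) + (∫ θ in (0 : ℝ)..δ t, h θ • x (t - θ))
        + B (Kconv μK k x t) + ∑ kk, Bk kk (Kconv μK k x (t - σ kk t))
        + B (r t) + ∑ kk, Bk kk (r (t - σ kk t))
      = A (x t) + ∑ j, Aj j (x (t - hd j)) + (∫ θ in (0 : ℝ)..D, h θ • x (t - θ))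
        + B (Kconv μK k x t) + ∑ kk, Bk kk (Kconv μK k x (t - T kk))
        + delayMismatchInput Aj B Bk hd τ T σ D δ h μK k x r t := by
  have hint : ∀ a ∈ Icc 0 (D + ε), ∀ b ∈ Icc 0 (D + ε),
      IntervalIntegrable (fun θ => h θ • x (t - θ)) volume a b := fun a ha b hb =>
    ((hh.smul (hx.comp (continuous_const.sub continuous_id)).continuousOn).mono
      (uIcc_subset_Icc ha hb)).intervalIntegrable
  have hD : D ∈ Icc 0 (D + ε) := ⟨by linarith, by linarith⟩
  rw [delayMismatchInput, ← intervalIntegral.integral_add_adjacent_intervals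
    (hint 0 ⟨le_rfl, by linarith⟩ D hD) (hint D hD (δ t) ⟨by linarith, hδ.2⟩)]
  simp only [map_sub, Finset.sum_sub_distrib]
  abel

lemma norm_delayMismatchInput_le {μ : Fin J → ℝ} {ν : Fin K → ℝ} {ε H Ck MK : ℝ}
    [IsFiniteMeasure μK]
    (hτ : ∀ j t, hd j - μ j ≤ τ j t ∧ τ j t ≤ hd j + μ j)
    (hσ : ∀ kk t, T kk - ν kk ≤ σ kk t ∧ σ kk t ≤ T kk + ν kk)
    (hδ : ∀ t, D - ε ≤ δ t ∧ δ t ≤ D + ε) (hεD : ε ≤ D)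
    (hH : 0 ≤ H) (hh : ∀ θ ∈ Icc 0 (D + ε), ‖h θ‖ ≤ H)
    (hsupp : μK (Iio 0) = 0) (hk : StronglyMeasurable k) (hCk : ∀ θ, ‖k θ‖ ≤ Ck) (hMK : 0 ≤ MK)
    (hgain : ∀ φ : ℝ → EuclideanSpace ℂ (Fin n), IsBddFun φ → (∀ t ≤ (0 : ℝ), φ t = 0) →
      supNorm (Kconv μK k φ) ≤ MK * supNorm φ)
    {x x' : ℝ → EuclideanSpace ℂ (Fin n)} (hx : ∀ t, HasDerivAt x (x' t) t)
    (hx0 : ∀ t ≤ 0, x t = 0) (hxb : IsBddFun x) (hx'b : IsBddFun x')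
    {r : ℝ → EuclideanSpace ℂ (Fin p)} (hrb : IsBddFun r) (hr0 : ∀ t ≤ 0, r t = 0) (t : ℝ) :
    ‖delayMismatchInput Aj B Bk hd τ T σ D δ h μK k x r t‖
      ≤ ((∑ j, μ j * ‖Aj j‖) + (∑ kk, ν kk * ‖Bk kk‖) * MK) * supNorm x'
        + ε * H * supNorm x + (‖B‖ + ∑ kk, ‖Bk kk‖) * supNorm r := by
  have hlip := norm_sub_le_supNorm_deriv_mul hx hx0 hx'b
  have hxc : Continuous x := continuous_iff_continuousAt.2 fun t => (hx t).continuousAt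
  have hA : ‖∑ j, Aj j (x (t - τ j t) - x (t - hd j))‖ ≤ (∑ j, μ j * ‖Aj j‖) * supNorm x' :=
    norm_sum_apply_le_sum_mul _ _ _ _ fun j _ => (hlip _ _).trans <| by
      rw [mul_comm (μ j)]
      exact mul_le_mul_of_nonneg_left (abs_le.2 ⟨by linarith [hτ j t], by linarith [hτ j t]⟩)
        (supNorm_nonneg _)
  have hI : ‖∫ θ in D..δ t, h θ • x (t - θ)‖ ≤ ε * H * supNorm x := by
    refine (norm_intervalIntegral_smul_le hH (fun θ hθ => hh θ ?_)
      fun θ => hxb.norm_le_supNorm_of_eq_zero hx0 (t - θ)).trans ?_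
    · rcases mem_uIoc.1 hθ with hθ | hθ <;>
        exact ⟨by linarith [hδ t], by linarith [hδ t]⟩
    · have hδD : |δ t - D| ≤ ε := abs_le.2 ⟨by linarith [hδ t], by linarith [hδ t]⟩
      exact (mul_le_mul_of_nonneg_left hδD (mul_nonneg hH (supNorm_nonneg x))).trans_eq
        (by ring)
  have hK : ‖∑ kk, Bk kk (Kconv μK k x (t - σ kk t) - Kconv μK k x (t - T kk))‖
      ≤ (∑ kk, ν kk * ‖Bk kk‖) * (MK * supNorm x') :=
    norm_sum_apply_le_sum_mul _ _ _ _ fun kk _ =>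
      (norm_Kconv_sub_le hsupp hk hCk hMK hgain hxc hxb hx0 hlip _ _).trans <| by
        have hσT : |t - σ kk t - (t - T kk)| ≤ ν kk :=
          abs_le.2 ⟨by linarith [hσ kk t], by linarith [hσ kk t]⟩
        exact (mul_le_mul_of_nonneg_left (mul_le_mul_of_nonneg_left hσT (supNorm_nonneg _))
          hMK).trans_eq (by ring)
  have hr : ‖B (r t) + ∑ kk, Bk kk (r (t - σ kk t))‖ ≤ (‖B‖ + ∑ kk, ‖Bk kk‖) * supNorm r := by
    have hrle := hrb.norm_le_supNorm_of_eq_zero hr0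
    refine (norm_add_le _ _).trans ?_
    rw [add_mul]
    gcongr
    · exact B.le_of_opNorm_le_of_le le_rfl (hrle t)
    · simpa using norm_sum_apply_le_sum_mul _ Bk _ (fun _ => 1) fun kk _ => by
        simpa using hrle (t - σ kk t)
  calc _ ≤ _ := norm_add₄_le
    _ ≤ _ := add_le_add (add_le_add (add_le_add hA hI) hK) hr
    _ = _ := by ring

end ClosedLoop

theorem stmt_4_general (n p J K : ℕ)
    (A : EuclideanSpace ℂ (Fin n) →L[ℂ] EuclideanSpace ℂ (Fin n))
    (Aj : Fin J → EuclideanSpace ℂ (Fin n) →L[ℂ] EuclideanSpace ℂ (Fin n))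
    (B : EuclideanSpace ℂ (Fin p) →L[ℂ] EuclideanSpace ℂ (Fin n))
    (Bk : Fin K → EuclideanSpace ℂ (Fin p) →L[ℂ] EuclideanSpace ℂ (Fin n))
    (D ε : ℝ) (hε0 : 0 ≤ ε) (hεD : ε ≤ D)
    (hd μ : Fin J → ℝ) (hμ0 : ∀ j, 0 ≤ μ j)
    (T ν : Fin K → ℝ) (hν0 : ∀ k, 0 ≤ ν k)
    (h : ℝ → ℂ) (hcont : ContinuousOn h (Set.Icc 0 (D + ε)))
    (hNorm : ℝ) (hhNorm : hNorm = ⨆ θ : Set.Icc (0 : ℝ) (D + ε), ‖h (θ : ℝ)‖)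
    (τ : Fin J → ℝ → ℝ)
    (hτb : ∀ j t, hd j - μ j ≤ τ j t ∧ τ j t ≤ hd j + μ j)
    (σ : Fin K → ℝ → ℝ)
    (hσb : ∀ k t, T k - ν k ≤ σ k t ∧ σ k t ≤ T k + ν k)
    (δ : ℝ → ℝ) (hδb : ∀ t, D - ε ≤ δ t ∧ δ t ≤ D + ε)
    -- the controller: a finite kernel measure supported on `[0,∞)`
    (μK : Measure ℝ) [IsFiniteMeasure μK] (hμKsupp : μK (Set.Iio 0) = 0)
    (k : ℝ → EuclideanSpace ℂ (Fin n) →L[ℂ] EuclideanSpace ℂ (Fin p))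
    (hkmeas : StronglyMeasurable k) (hkbdd : ∃ Ck, ∀ θ, ‖k θ‖ ≤ Ck)
    (MK Mcl Mclnom Mclnomd : ℝ)
    (hMK0 : 0 ≤ MK) (hMcl0 : 0 ≤ Mcl)
    -- the `L∞` gain of the controller
    (hKgain : ∀ φ : ℝ → EuclideanSpace ℂ (Fin n),
      IsBddFun φ → (∀ t ≤ (0 : ℝ), φ t = 0) →
      supNorm (Kconv μK k φ) ≤ MK * supNorm φ)
    -- gains of the closed-loop auxiliary system
    (haux : ∀ w z z' : ℝ → EuclideanSpace ℂ (Fin n),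
      IsBddFun w →
      (∀ t, HasDerivAt z (z' t) t) → (∀ t ≤ (0 : ℝ), z t = 0) →
      (∀ t > (0 : ℝ), z' t = A (z t) + ∑ j : Fin J, Aj j (z (t - hd j))
        + (∫ θ in (0 : ℝ)..D, h θ • z (t - θ))
        + B (Kconv μK k z t) + ∑ kk : Fin K, Bk kk (Kconv μK k z (t - T kk))
        + w t) →
      IsBddFun z → IsBddFun z' →
      supNorm z ≤ Mcl * supNorm w ∧ supNorm z' ≤ Mcl * supNorm w)
    -- the smallness condition
    (hsmall : Mcl * ((∑ j : Fin J, μ j * ‖Aj j‖)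
      + (∑ kk : Fin K, ν kk * ‖Bk kk‖) * MK + ε * hNorm) < 1) :
    ∃ C : ℝ, 0 ≤ C ∧
      ∀ r : ℝ → EuclideanSpace ℂ (Fin p), IsBddFun r → (∀ t ≤ (0 : ℝ), r t = 0) →
      ∀ v v' : ℝ → EuclideanSpace ℂ (Fin n),
        (∀ t, HasDerivAt v (v' t) t) → (∀ t ≤ (0 : ℝ), v t = 0) →
        -- `v` is the closed-loop nominal solution for the reference `r`
        (∀ t > (0 : ℝ), v' t = A (v t) + ∑ j : Fin J, Aj j (v (t - hd j))
          + (∫ θ in (0 : ℝ)..D, h θ • v (t - θ))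
          + B (Kconv μK k v t) + ∑ kk : Fin K, Bk kk (Kconv μK k v (t - T kk))
          + B (r t) + ∑ kk : Fin K, Bk kk (r (t - T kk))) →
        supNorm v ≤ Mclnom * supNorm r → supNorm v' ≤ Mclnomd * supNorm r →
      ∀ x x' : ℝ → EuclideanSpace ℂ (Fin n),
        (∀ t, HasDerivAt x (x' t) t) → (∀ t ≤ (0 : ℝ), x t = 0) →
        -- `x` is the closed-loop time-varying solution for the reference `r`
        (∀ t > (0 : ℝ), x' t = A (x t) + ∑ j : Fin J, Aj j (x (t - τ j t))
          + (∫ θ in (0 : ℝ)..(δ t), h θ • x (t - θ))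
          + B (Kconv μK k x t)
          + ∑ kk : Fin K, Bk kk (Kconv μK k x (t - σ kk t))
          + B (r t) + ∑ kk : Fin K, Bk kk (r (t - σ kk t))) →
        IsBddFun x → IsBddFun x' →
        supNorm x ≤ C * supNorm r := by
  obtain ⟨Ck, hCk⟩ := hkbdd
  have hH : ∀ θ ∈ Icc 0 (D + ε), ‖h θ‖ ≤ hNorm := fun θ hθ =>
    hhNorm ▸ isCompact_Icc.norm_le_iSup_norm hcont hθ
  have hH0 : 0 ≤ hNorm := hhNorm ▸ Real.iSup_nonneg fun _ => norm_nonneg _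
  have hα : 0 ≤ (∑ j, μ j * ‖Aj j‖) + (∑ kk, ν kk * ‖Bk kk‖) * MK :=
    add_nonneg (Finset.sum_nonneg fun j _ => mul_nonneg (hμ0 j) (norm_nonneg _))
      (mul_nonneg (Finset.sum_nonneg fun kk _ => mul_nonneg (hν0 kk) (norm_nonneg _)) hMK0)
  refine ⟨Mcl * (‖B‖ + ∑ kk, ‖Bk kk‖) / (1 - Mcl * ((∑ j, μ j * ‖Aj j‖)
      + (∑ kk, ν kk * ‖Bk kk‖) * MK + ε * hNorm)),
    div_nonneg (mul_nonneg hMcl0 (by positivity)) (by linarith), ?_⟩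
  intro r hrb hr0 _ _ _ _ _ _ _ x x' hx hx0 hxeq hxb hx'b
  have hw := norm_delayMismatchInput_le Aj B Bk hd τ T σ D δ h μK k hτb hσb hδb hεD hH0 hH
    hμKsupp hkmeas hCk hMK0 hKgain hx hx0 hxb hx'b hrb hr0
  have hxc : Continuous x := continuous_iff_continuousAt.2 fun t => (hx t).continuousAt
  obtain ⟨hX, hX'⟩ := haux _ x x' ⟨_, hw⟩ hx hx0 (fun t ht => (hxeq t ht).trans
    (timeVarying_rhs_eq_nominal_rhs_add Aj B Bk hd τ T σ D δ h μK k A hε0 hεD hcont hxc r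
      (hδb t))) hxb hx'b
  exact le_of_small_gain hMcl0 hα (mul_nonneg hε0 hH0) hX hX'
    (supNorm_le_of_forall_pos fun t _ => hw t) hsmall

/-- (Theorem 4.1, part 1: BIBO stabilization of retarded systems with
time-varying delays by a stable controller `u = 𝒦∗x + r`.) -/
theorem stmt_4 (n p J K : ℕ)
    (A : EuclideanSpace ℂ (Fin n) →L[ℂ] EuclideanSpace ℂ (Fin n))
    (Aj : Fin J → EuclideanSpace ℂ (Fin n) →L[ℂ] EuclideanSpace ℂ (Fin n))
    (B : EuclideanSpace ℂ (Fin p) →L[ℂ] EuclideanSpace ℂ (Fin n))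
    (Bk : Fin K → EuclideanSpace ℂ (Fin p) →L[ℂ] EuclideanSpace ℂ (Fin n))
    (D ε : ℝ) (hε0 : 0 ≤ ε) (hεD : ε ≤ D)
    (hd μ : Fin J → ℝ) (hμ0 : ∀ j, 0 ≤ μ j) (hμh : ∀ j, μ j ≤ hd j)
    (T ν : Fin K → ℝ) (hν0 : ∀ k, 0 ≤ ν k) (hνT : ∀ k, ν k ≤ T k)
    (h : ℝ → ℂ) (hcont : ContinuousOn h (Set.Icc 0 (D + ε)))
    (hNorm : ℝ) (hhNorm : hNorm = ⨆ θ : Set.Icc (0 : ℝ) (D + ε), ‖h (θ : ℝ)‖)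
    (τ : Fin J → ℝ → ℝ) (hτm : ∀ j, Measurable (τ j))
    (hτb : ∀ j t, hd j - μ j ≤ τ j t ∧ τ j t ≤ hd j + μ j)
    (σ : Fin K → ℝ → ℝ) (hσm : ∀ k, Measurable (σ k))
    (hσb : ∀ k t, T k - ν k ≤ σ k t ∧ σ k t ≤ T k + ν k)
    (δ : ℝ → ℝ) (hδm : Measurable δ) (hδb : ∀ t, D - ε ≤ δ t ∧ δ t ≤ D + ε)
    -- the controller: a finite kernel measure supported on `[0,∞)`
    (μK : Measure ℝ) [IsFiniteMeasure μK] (hμKsupp : μK (Set.Iio 0) = 0)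
    (k : ℝ → EuclideanSpace ℂ (Fin n) →L[ℂ] EuclideanSpace ℂ (Fin p))
    (hkmeas : StronglyMeasurable k) (hkbdd : ∃ Ck, ∀ θ, ‖k θ‖ ≤ Ck)
    (MK Mcl Mclnom Mclnomd : ℝ)
    (hMK0 : 0 ≤ MK) (hMcl0 : 0 ≤ Mcl) (hMclnom0 : 0 ≤ Mclnom)
    (hMclnomd0 : 0 ≤ Mclnomd)
    -- the `L∞` gain of the controller
    (hKgain : ∀ φ : ℝ → EuclideanSpace ℂ (Fin n),
      IsBddFun φ → (∀ t ≤ (0 : ℝ), φ t = 0) →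
      supNorm (Kconv μK k φ) ≤ MK * supNorm φ)
    -- gains of the closed-loop auxiliary system
    (haux : ∀ w z z' : ℝ → EuclideanSpace ℂ (Fin n),
      IsBddFun w →
      (∀ t, HasDerivAt z (z' t) t) → (∀ t ≤ (0 : ℝ), z t = 0) →
      (∀ t > (0 : ℝ), z' t = A (z t) + ∑ j : Fin J, Aj j (z (t - hd j))
        + (∫ θ in (0 : ℝ)..D, h θ • z (t - θ))
        + B (Kconv μK k z t) + ∑ kk : Fin K, Bk kk (Kconv μK k z (t - T kk))
        + w t) →
      IsBddFun z → IsBddFun z' →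
      supNorm z ≤ Mcl * supNorm w ∧ supNorm z' ≤ Mcl * supNorm w)
    -- the smallness condition
    (hsmall : Mcl * ((∑ j : Fin J, μ j * ‖Aj j‖)
      + (∑ kk : Fin K, ν kk * ‖Bk kk‖) * MK + ε * hNorm) < 1) :
    ∃ C : ℝ, 0 ≤ C ∧
      ∀ r : ℝ → EuclideanSpace ℂ (Fin p), IsBddFun r → (∀ t ≤ (0 : ℝ), r t = 0) →
      ∀ v v' : ℝ → EuclideanSpace ℂ (Fin n),
        (∀ t, HasDerivAt v (v' t) t) → (∀ t ≤ (0 : ℝ), v t = 0) →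
        -- `v` is the closed-loop nominal solution for the reference `r`
        (∀ t > (0 : ℝ), v' t = A (v t) + ∑ j : Fin J, Aj j (v (t - hd j))
          + (∫ θ in (0 : ℝ)..D, h θ • v (t - θ))
          + B (Kconv μK k v t) + ∑ kk : Fin K, Bk kk (Kconv μK k v (t - T kk))
          + B (r t) + ∑ kk : Fin K, Bk kk (r (t - T kk))) →
        supNorm v ≤ Mclnom * supNorm r → supNorm v' ≤ Mclnomd * supNorm r →
      ∀ x x' : ℝ → EuclideanSpace ℂ (Fin n),
        (∀ t, HasDerivAt x (x' t) t) → (∀ t ≤ (0 : ℝ), x t = 0) →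
        -- `x` is the closed-loop time-varying solution for the reference `r`
        (∀ t > (0 : ℝ), x' t = A (x t) + ∑ j : Fin J, Aj j (x (t - τ j t))
          + (∫ θ in (0 : ℝ)..(δ t), h θ • x (t - θ))
          + B (Kconv μK k x t)
          + ∑ kk : Fin K, Bk kk (Kconv μK k x (t - σ kk t))
          + B (r t) + ∑ kk : Fin K, Bk kk (r (t - σ kk t))) →
        IsBddFun x → IsBddFun x' →
        supNorm x ≤ C * supNorm r :=
  stmt_4_general n p J K A Aj B Bk D ε hε0 hεD hd μ hμ0 T ν hν0 h hcont hNorm hhNorm τ hτb σ hσb δ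
    hδb μK hμKsupp k hkmeas hkbdd MK Mcl Mclnom Mclnomd hMK0 hMcl0 hKgain haux hsmall
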